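/- arXiv:1011.3085 — 3 statements merged into one kernel-verified Lean document; each statement's English description precedes it below -/
import Mathlib

section
/- Let p(x,τ) = Σ_{j=0}^N A_j(τ)·λ_j·e^{−λ_j x} with distinct rates λ_j > 0 and Σ_j A_j(τ) = 1. If p satisfies ∂p/∂τ = −p + 2∫₀^∞ p(y)p(x+y) dy for all x ≥ 0, then the coefficients satisfy dA_k/dτ = A_k·Σ_{j=0}^N A_j·(λ_j − λ_k)/(λ_j + λ_k). -/
/-!
Substituting the exponential ansatz into the master equation and integrating term by term,
`∫₀^∞ e^{-λᵢ y} e^{-λⱼ (x+y)} dy = e^{-λⱼ x} / (λᵢ + λⱼ)`, both sides become linear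
combinations of the exponentials `e^{-λⱼ x}`. Since exponentials with distinct rates are
linearly independent on `[0, ∞)` (the slowest-decaying one dominates as `x → ∞`), the
coefficients of `e^{-λₖ x}` agree, which is a linear equation for `A_k'`; the constraint
`Σ_j A_j = 1` turns its solution into the stated form.
-/

open MeasureTheory Filter Finset Real Topology

section ExpSums

variable {ι : Type*} {s : Finset ι} {lam c : ι → ℝ}

theorem tendsto_sum_mul_exp_neg_atTop (hlam : ∀ i ∈ s, 0 < lam i) :
    Tendsto (fun x => ∑ i ∈ s, c i * exp (-(lam i * x))) atTop (𝓝 0) := by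
  rw [← sum_const_zero (s := s)]
  refine tendsto_finsetSum s fun i hi => ?_
  have h := (tendsto_exp_neg_atTop_nhds_zero.comp
    (tendsto_id.const_mul_atTop (hlam i hi))).const_mul (c i)
  simpa only [Function.comp_def, id, mul_zero] using h

theorem eq_zero_of_sum_mul_exp_neg_eventually_eq_zero (hlam : Set.InjOn lam s)
    (h : ∀ᶠ x in atTop, ∑ i ∈ s, c i * exp (-(lam i * x)) = 0) : ∀ i ∈ s, c i = 0 := by
  classical
  induction s using Finset.induction_on_min_value lam generalizing c with
  | empty => simp
  | insert a s ha hmin ih =>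
    have hlt : ∀ i ∈ s, 0 < lam i - lam a := fun i hi =>
      sub_pos.2 <| (hmin i hi).lt_of_ne fun he =>
        ha (hlam (mem_insert_self a s) (mem_insert_of_mem hi) he ▸ hi)
    -- multiplying by `exp (lam a * x)` isolates `c a` as the limit at infinity
    have hrescaled : ∀ x, exp (lam a * x) * ∑ i ∈ insert a s, c i * exp (-(lam i * x)) =
        c a + ∑ i ∈ s, c i * exp (-((lam i - lam a) * x)) := by
      intro x
      rw [sum_insert ha, mul_add, mul_sum]
      congr 1
      · rw [mul_left_comm, ← exp_add, add_neg_cancel, exp_zero, mul_one]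
      · refine sum_congr rfl fun i _ => ?_
        rw [mul_left_comm, ← exp_add]
        ring_nf
    have hca : c a = 0 := by
      have hlim : Tendsto (fun x => exp (lam a * x) * ∑ i ∈ insert a s, c i * exp (-(lam i * x)))
          atTop (𝓝 (c a)) := by
        simp_rw [hrescaled]
        simpa using (tendsto_sum_mul_exp_neg_atTop hlt).const_add (c a)
      refine tendsto_nhds_unique hlim (tendsto_const_nhds.congr' ?_)
      filter_upwards [h] with x hx
      rw [hx, mul_zero]
    intro i hi
    rcases mem_insert.1 hi with rfl | hi
    · exact hca
    refine ih (hlam.mono (subset_insert a s)) ?_ i hi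
    filter_upwards [h] with x hx
    rwa [sum_insert ha, hca, zero_mul, zero_add] at hx

theorem integrableOn_Ioi_mul_exp_neg {b : ℝ} (hb : 0 < b) (c : ℝ) :
    IntegrableOn (fun y => c * exp (-(b * y))) (Set.Ioi 0) := by
  simpa only [neg_mul, IntegrableOn] using (exp_neg_integrableOn_Ioi 0 hb).const_mul c

theorem integrableOn_Ioi_sum_mul_exp_neg (hlam : ∀ i ∈ s, 0 < lam i) :
    IntegrableOn (fun y => ∑ i ∈ s, c i * exp (-(lam i * y))) (Set.Ioi 0) :=
  integrable_finsetSum s fun i hi => integrableOn_Ioi_mul_exp_neg (hlam i hi) (c i)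

theorem integral_Ioi_sum_mul_exp_neg (hlam : ∀ i ∈ s, 0 < lam i) :
    ∫ y in Set.Ioi 0, ∑ i ∈ s, c i * exp (-(lam i * y)) = ∑ i ∈ s, c i / lam i := by
  rw [integral_finsetSum s fun i hi => integrableOn_Ioi_mul_exp_neg (hlam i hi) (c i)]
  refine sum_congr rfl fun i hi => ?_
  simp_rw [integral_const_mul, ← neg_mul, integral_exp_mul_Ioi (neg_lt_zero.2 (hlam i hi))]
  simp [div_eq_mul_inv]

variable [Fintype ι]

theorem integral_Ioi_sum_mul_exp_neg_mul_sum_mul_exp_neg_add (hlam : ∀ i, 0 < lam i)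
    (a b : ι → ℝ) (x : ℝ) :
    ∫ y in Set.Ioi 0, (∑ i, a i * exp (-(lam i * y))) * ∑ j, b j * exp (-(lam j * (x + y))) =
      ∑ j, (b j * ∑ i, a i / (lam i + lam j)) * exp (-(lam j * x)) := by
  have hrate_pos : ∀ j, ∀ i ∈ (univ : Finset ι), 0 < lam i + lam j := fun j i _ =>
    add_pos (hlam i) (hlam j)
  have hintegrand : ∀ y, (∑ i, a i * exp (-(lam i * y))) * ∑ j, b j * exp (-(lam j * (x + y))) =
      ∑ j, b j * exp (-(lam j * x)) * ∑ i, a i * exp (-((lam i + lam j) * y)) := by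
    intro y
    rw [sum_mul_sum, sum_comm]
    simp_rw [mul_sum]
    refine sum_congr rfl fun j _ => sum_congr rfl fun i _ => ?_
    rw [show -(lam j * (x + y)) = -(lam j * x) + -(lam j * y) by ring,
      show -((lam i + lam j) * y) = -(lam i * y) + -(lam j * y) by ring, exp_add, exp_add]
    ring
  simp_rw [hintegrand]
  rw [integral_finsetSum univ fun j _ =>
    (integrableOn_Ioi_sum_mul_exp_neg (hrate_pos j)).const_mul _]
  refine sum_congr rfl fun j _ => ?_
  rw [integral_const_mul, integral_Ioi_sum_mul_exp_neg (hrate_pos j)]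
  ring

end ExpSums

theorem sum_mul_sub_div_add_eq {ι : Type*} {s : Finset ι} {w lam : ι → ℝ} {l : ℝ}
    (hw : ∑ j ∈ s, w j = 1) (hl : ∀ j ∈ s, lam j + l ≠ 0) :
    ∑ j ∈ s, w j * (lam j - l) / (lam j + l) = 2 * ∑ j ∈ s, w j * lam j / (lam j + l) - 1 := by
  rw [← hw, mul_sum, ← sum_sub_distrib]
  refine sum_congr rfl fun j hj => ?_
  field_simp [hl j hj]
  ring

/-- If `p (x, τ) = Σ_j A_j τ * λ_j * exp (-λ_j x)` (distinct positive rates, coefficients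
summing to `1`) satisfies the master equation
`∂p/∂τ = -p + 2 ∫₀^∞ p(y) p(x+y) dy` for all `x ≥ 0`, then the coefficients satisfy
`A_k' = A_k * Σ_j A_j (λ_j - λ_k)/(λ_j + λ_k)`. -/
theorem coefficients_evolution (N : ℕ) (lam : Fin (N + 1) → ℝ)
    (hpos : ∀ j, 0 < lam j) (hmono : StrictMono lam)
    (A : Fin (N + 1) → ℝ → ℝ)
    (hdiff : ∀ k, Differentiable ℝ (A k))
    (hsum : ∀ τ, ∑ j, A j τ = 1)
    (p : ℝ → ℝ → ℝ)
    (hp : ∀ x τ, p x τ = ∑ j, A j τ * lam j * Real.exp (-(lam j * x)))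
    (hmaster : ∀ x ≥ (0 : ℝ), ∀ τ : ℝ,
      HasDerivAt (fun τ => p x τ)
        (-(p x τ) + 2 * ∫ y in Set.Ioi (0 : ℝ), p y τ * p (x + y) τ) τ) :
    ∀ k, ∀ τ : ℝ,
      HasDerivAt (A k)
        (A k τ * ∑ j, A j τ * (lam j - lam k) / (lam j + lam k)) τ := by
  intro k τ
  have hp_deriv : ∀ x, HasDerivAt (fun τ => p x τ)
      (∑ j, deriv (A j) τ * lam j * exp (-(lam j * x))) τ := fun x => by
    simp_rw [hp x]
    exact HasDerivAt.fun_sum fun j _ =>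
      (((hdiff j τ).hasDerivAt).mul_const _).mul_const _
  have hcoeff : ∀ᶠ x in atTop, ∑ j, (deriv (A j) τ * lam j + A j τ * lam j -
      2 * (A j τ * lam j * ∑ i, A i τ * lam i / (lam i + lam j))) * exp (-(lam j * x)) = 0 := by
    filter_upwards [eventually_ge_atTop 0] with x hx
    have h := (hp_deriv x).unique (hmaster x hx τ)
    simp_rw [hp, integral_Ioi_sum_mul_exp_neg_mul_sum_mul_exp_neg_add hpos] at h
    simp only [sub_mul, add_mul, sum_sub_distrib, sum_add_distrib, mul_assoc, ← mul_sum] at h ⊢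
    linarith
  have hk := eq_zero_of_sum_mul_exp_neg_eventually_eq_zero hmono.injective.injOn hcoeff k
    (mem_univ k)
  refine (hdiff k τ).hasDerivAt.congr_deriv ?_
  rw [sum_mul_sub_div_add_eq (hsum τ) fun j _ => (add_pos (hpos j) (hpos k)).ne']
  exact mul_left_cancel₀ (hpos k).ne' (by linear_combination hk)
end

section
/- Let Aⁿ : ℕ → ℝ≥0 be defined by the recursion A^{(k+1)}_n = Σ_{l=0}^∞ A^{(k)}_l·(A^{(k)}_{n+l} + A^{(k)}_{n+l+1}). If Σ_n A^{(k)}_n = 1 (absolutely convergent) then Σ_n A^{(k+1)}_n = 1, i.e., the normalization is preserved by the recursion. -/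
/-- The Laguerre-coefficient recursion `B n = Σ_l A_l (A_{n+l} + A_{n+l+1})` preserves
the normalization `Σ A = 1` for nonnegative summable sequences. -/
theorem laguerre_recursion_preserves_normalization (A : ℕ → ℝ)
    (hA : ∀ n, 0 ≤ A n) (hsummable : Summable A) (hnorm : ∑' n, A n = 1)
    (B : ℕ → ℝ)
    (hB : ∀ n, B n = ∑' l, A l * (A (n + l) + A (n + l + 1))) :
    Summable B ∧ ∑' n, B n = 1 := by
  set P : ℕ → ℝ := fun k => ∑ i ∈ Finset.range k, A i with hPdef
  have hPnonneg : ∀ k, 0 ≤ P k := fun k => Finset.sum_nonneg fun i _ => hA i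
  have hPle : ∀ k, P k ≤ 1 := by
    intro k
    rw [← hnorm]
    exact Summable.sum_le_tsum (Finset.range k) (fun i _ => hA i) hsummable
  have hT : ∀ l : ℕ, Summable (fun n => A (n + l)) :=
    fun l => (summable_nat_add_iff l).2 hsummable
  have hTsum : ∀ l : ℕ, ∑' n, A (n + l) = 1 - P l := by
    intro l
    have h := Summable.sum_add_tsum_nat_add (f := A) l hsummable
    rw [hnorm] at h
    simp only [hPdef]
    linarith
  -- the double-sum function, indexed (l, n)
  set f : ℕ × ℕ → ℝ := fun p => A p.1 * (A (p.2 + p.1) + A (p.2 + p.1 + 1)) with hfdef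
  have hfnonneg : 0 ≤ f := by
    intro p
    exact mul_nonneg (hA _) (add_nonneg (hA _) (hA _))
  have hshift : ∀ l n : ℕ, A (n + l + 1) = A (n + (l + 1)) := by
    intro l n; ring_nf
  have hslice : ∀ l : ℕ, Summable fun n => f (l, n) := by
    intro l
    have : Summable fun n => A (n + l) + A (n + (l + 1)) := (hT l).add (hT (l + 1))
    have := this.mul_left (A l)
    simpa [hfdef, hshift] using this
  have hslicesum : ∀ l : ℕ, ∑' n, f (l, n) = A l * ((1 - P l) + (1 - P (l + 1))) := by
    intro l
    have : ∑' n, f (l, n) = A l * ∑' n, (A (n + l) + A (n + (l + 1))) := by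
      rw [← tsum_mul_left]
      apply tsum_congr
      intro n
      simp [hfdef, hshift]
    rw [this, Summable.tsum_add (hT l) (hT (l + 1)), hTsum l, hTsum (l + 1)]
  have hmarg : Summable fun l => ∑' n, f (l, n) := by
    refine Summable.of_nonneg_of_le
      (fun l => tsum_nonneg fun n => hfnonneg (l, n)) ?_ (hsummable.mul_left 2)
    intro l
    rw [hslicesum l]
    have h1 : (1 - P l) + (1 - P (l + 1)) ≤ 2 := by
      have := hPnonneg l; have := hPnonneg (l + 1); linarith
    calc A l * ((1 - P l) + (1 - P (l + 1))) ≤ A l * 2 :=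
          mul_le_mul_of_nonneg_left h1 (hA l)
      _ = 2 * A l := by ring
  have hf : Summable f := (summable_prod_of_nonneg hfnonneg).2 ⟨fun l => hslice l, hmarg⟩
  have hfswap : Summable fun p : ℕ × ℕ => f p.swap := hf.prod_symm
  have hBeq : B = fun n => ∑' l, (fun p : ℕ × ℕ => f p.swap) (n, l) := by
    funext n
    rw [hB n]
    rfl
  have hBsum : Summable B := by
    rw [hBeq]
    exact hfswap.prod
  refine ⟨hBsum, ?_⟩
  -- Fubini
  have hcomm : ∑' n, B n = ∑' l, ∑' n, f (l, n) := by
    rw [hBeq]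
    rw [← Summable.tsum_prod hfswap]
    have hsw : ∑' p : ℕ × ℕ, f p.swap = ∑' p, f p := (Equiv.prodComm ℕ ℕ).tsum_eq f
    rw [hsw, Summable.tsum_prod hf]
  rw [hcomm]
  -- evaluate the remaining sum via partial sums
  have hpartial : ∀ N : ℕ,
      ∑ l ∈ Finset.range N, A l * ((1 - P l) + (1 - P (l + 1))) = 2 * P N - P N ^ 2 := by
    intro N
    induction N with
    | zero => simp [hPdef]
    | succ N ih =>
        rw [Finset.sum_range_succ, ih]
        have hPs : P (N + 1) = P N + A N := by
          simp [hPdef, Finset.sum_range_succ]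
        rw [hPs]; ring
  have hPtend : Filter.Tendsto P Filter.atTop (nhds 1) := by
    have := hsummable.hasSum.tendsto_sum_nat
    rw [hnorm] at this
    exact this
  have hlim : Filter.Tendsto (fun N => ∑ l ∈ Finset.range N, ∑' n, f (l, n))
      Filter.atTop (nhds 1) := by
    have heq : (fun N => ∑ l ∈ Finset.range N, ∑' n, f (l, n))
        = fun N => 2 * P N - P N ^ 2 := by
      funext N
      rw [← hpartial N]
      exact Finset.sum_congr rfl fun l _ => hslicesum l
    rw [heq]
    have h2 : Filter.Tendsto (fun N => 2 * P N - P N ^ 2) Filter.atTop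
        (nhds (2 * 1 - 1 ^ 2)) := (hPtend.const_mul 2).sub (hPtend.pow 2)
    norm_num at h2
    exact h2
  have hlim2 := hmarg.hasSum.tendsto_sum_nat
  exact tendsto_nhds_unique hlim2 hlim
end

section
/- If p : [0,∞) → [0,∞) is integrable with ∫₀^∞ p = 1 and satisfies p(x) = 2∫₀^∞ p(y)p(x+y) dy for a.e. x ≥ 0, and additionally p is of the form p(x) = q(x)e^{−λx} with q a polynomial and λ > 0, then q is constant and p(x) = λe^{−λx}. -/
open MeasureTheory Filter Polynomial

lemma tendsto_poly_mul_exp (P : ℝ[X]) {b : ℝ} (hb : 0 < b) :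
    Tendsto (fun x => P.eval x * Real.exp (-(b * x))) atTop (nhds 0) := by
  have h1 : Tendsto (fun x : ℝ => b * x) atTop atTop :=
    tendsto_id.const_mul_atTop hb
  have h2 := ((P.comp (Polynomial.C b⁻¹ * Polynomial.X)).tendsto_div_exp_atTop).comp h1
  refine h2.congr fun x => ?_
  simp only [Function.comp_apply, Polynomial.eval_comp, Polynomial.eval_mul,
    Polynomial.eval_C, Polynomial.eval_X, inv_mul_cancel_left₀ hb.ne']
  rw [Real.exp_neg, div_eq_mul_inv]

lemma integrableOn_poly_mul_exp (P : ℝ[X]) {b : ℝ} (hb : 0 < b) :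
    IntegrableOn (fun x => P.eval x * Real.exp (-(b * x))) (Set.Ioi (0 : ℝ)) := by
  apply integrable_of_isBigO_exp_neg (half_pos hb)
    ((P.continuous_aeval.mul (Real.continuous_exp.comp (by continuity))).continuousOn)
  have ht : Tendsto (fun x => (P.eval x * Real.exp (-(b * x))) / Real.exp (-(b/2) * x))
      atTop (nhds 0) := by
    refine (tendsto_poly_mul_exp P (half_pos hb)).congr fun x => ?_
    rw [eq_div_iff (Real.exp_ne_zero _), mul_assoc, ← Real.exp_add]
    congr 2
    ring
  exact (Asymptotics.isLittleO_iff_tendsto fun x h =>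
    absurd h (Real.exp_ne_zero _)).mpr ht |>.isBigO

lemma poly_eq_zero_of_ae (r : ℝ[X])
    (h : ∀ᵐ x ∂(volume.restrict (Set.Ioi (0 : ℝ))), r.eval x = 0) : r = 0 := by
  by_contra hr
  have hfin : Set.Finite {x : ℝ | r.IsRoot x} := Polynomial.finite_setOf_isRoot hr
  have h0 : volume {x : ℝ | r.eval x = 0} = 0 := hfin.measure_zero _
  have h1 : volume ({x : ℝ | r.eval x ≠ 0} ∩ Set.Ioi 0) = 0 := by
    have := ae_iff.mp h
    rwa [Measure.restrict_apply₀] at this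
    · exact (measurableSet_eq_fun (by fun_prop) measurable_const).compl.nullMeasurableSet
  have hsub : Set.Ioi (0:ℝ) ⊆ {x : ℝ | r.eval x = 0} ∪ ({x : ℝ | r.eval x ≠ 0} ∩ Set.Ioi 0) := by
    intro x hx
    by_cases hc : r.eval x = 0
    · exact Or.inl hc
    · exact Or.inr ⟨hc, hx⟩
  have := (measure_mono hsub).trans (measure_union_le (μ := volume) _ _)
  rw [h0, h1, Real.volume_Ioi] at this
  simp at this

/-- If a probability density `p` on `[0,∞)` of the form `p x = q(x) e^{-l x}` with `q` a
polynomial and `l > 0` solves the fixed-point equation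
`p x = 2 ∫₀^∞ p(y) p(x+y) dy` a.e. on `(0,∞)`, then `q` is the constant `l` and
`p x = l e^{-l x}`. -/
theorem fixed_point_poly_exponential_is_exponential (l : ℝ) (hl : 0 < l)
    (q : Polynomial ℝ) (p : ℝ → ℝ)
    (hp : ∀ x, p x = q.eval x * Real.exp (-(l * x)))
    (hnonneg : ∀ x ≥ (0 : ℝ), 0 ≤ p x)
    (hint : IntegrableOn p (Set.Ioi (0 : ℝ)))
    (hnorm : (∫ x in Set.Ioi (0 : ℝ), p x) = 1)
    (hfixed : ∀ᵐ x ∂(volume.restrict (Set.Ioi (0 : ℝ))),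
      p x = 2 * ∫ y in Set.Ioi (0 : ℝ), p y * p (x + y)) :
    q = Polynomial.C l ∧ ∀ x, p x = l * Real.exp (-(l * x)) := by
  have h2l : (0:ℝ) < 2 * l := by linarith
  -- q is nonzero
  have hq0 : q ≠ 0 := by
    intro h
    rw [h] at hp
    simp only [Polynomial.eval_zero, zero_mul] at hp
    rw [show (fun x => p x) = fun _ => (0:ℝ) from funext hp] at hnorm
    · simp at hnorm
  set n := q.natDegree with hn
  -- moments
  set M : ℕ → ℝ := fun j => ∫ y in Set.Ioi (0:ℝ), (q * Polynomial.X ^ j).eval y *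
      Real.exp (-(2 * l * y)) with hM
  -- key pointwise identity for the convolution integral
  have key : ∀ x : ℝ, (∫ y in Set.Ioi (0:ℝ), p y * p (x + y)) =
      Real.exp (-(l * x)) * ∑ j ∈ Finset.range (n + 1),
        (Polynomial.hasseDeriv j q).eval x * M j := by
    intro x
    have h1 : ∀ y : ℝ, q.eval (x + y) = ∑ j ∈ Finset.range (n + 1),
        (Polynomial.hasseDeriv j q).eval x * y ^ j := by
      intro y
      have h := Polynomial.eval_eq_sum_range (p := Polynomial.taylor x q) y
      rw [Polynomial.taylor_eval, Polynomial.natDegree_taylor] at h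
      simp_rw [Polynomial.taylor_coeff] at h
      rw [add_comm x y]
      exact h
    have hrw : ∀ y : ℝ, p y * p (x + y) = ∑ j ∈ Finset.range (n + 1),
        Real.exp (-(l * x)) * ((Polynomial.hasseDeriv j q).eval x *
          ((q * Polynomial.X ^ j).eval y * Real.exp (-(2 * l * y)))) := by
      intro y
      have hexp : Real.exp (-(l * y)) * Real.exp (-(l * (x + y))) =
          Real.exp (-(l * x)) * Real.exp (-(2 * l * y)) := by
        rw [← Real.exp_add, ← Real.exp_add]
        congr 1
        ring
      rw [hp y, hp (x + y), h1 y, Finset.sum_mul, Finset.mul_sum]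
      refine Finset.sum_congr rfl fun j _ => ?_
      simp only [Polynomial.eval_mul, Polynomial.eval_pow, Polynomial.eval_X]
      linear_combination (q.eval y * ((Polynomial.hasseDeriv j q).eval x) * y ^ j) * hexp
    rw [integral_congr_ae (Filter.Eventually.of_forall hrw)]
    rw [integral_finset_sum]
    · simp_rw [integral_const_mul]
      rw [← Finset.mul_sum]
    · intro j _
      exact (((integrableOn_poly_mul_exp (q * Polynomial.X ^ j) h2l).const_mul
        _).const_mul _)
  -- the polynomial identity
  set Q : ℝ[X] := ∑ j ∈ Finset.range (n + 1),
      Polynomial.C (M j) * Polynomial.hasseDeriv j q with hQdef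
  have hqQ : q = Polynomial.C 2 * Q := by
    have hae : ∀ᵐ x ∂(volume.restrict (Set.Ioi (0:ℝ))),
        (q - Polynomial.C 2 * Q).eval x = 0 := by
      filter_upwards [hfixed] with x hx
      rw [key x, hp x] at hx
      have hQx : Q.eval x = ∑ j ∈ Finset.range (n + 1),
          (Polynomial.hasseDeriv j q).eval x * M j := by
        simp [hQdef, Polynomial.eval_finset_sum, mul_comm]
      have hcancel : q.eval x = 2 * Q.eval x := by
        have hne := Real.exp_ne_zero (-(l * x))
        refine mul_right_cancel₀ hne ?_
        rw [hQx]
        linear_combination hx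
      simp [hcancel]
    have := poly_eq_zero_of_ae _ hae
    linear_combination this
  have hcoeff : ∀ k, q.coeff k = 2 * ∑ j ∈ Finset.range (n + 1),
      M j * ((k + j).choose j * q.coeff (k + j)) := by
    intro k
    conv_lhs => rw [hqQ]
    simp only [Polynomial.coeff_C_mul, hQdef, Polynomial.finset_sum_coeff,
      Polynomial.coeff_C_mul, Polynomial.hasseDeriv_coeff]
  have ha : q.coeff n ≠ 0 := by
    rw [hn, ← Polynomial.leadingCoeff]
    exact Polynomial.leadingCoeff_ne_zero.mpr hq0
  -- top coefficient: 2 * M 0 = 1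
  have hM0 : 2 * M 0 = 1 := by
    have h := hcoeff n
    rw [Finset.sum_eq_single 0] at h
    · simp only [Nat.add_zero, Nat.choose_zero_right, Nat.cast_one, one_mul] at h
      have : (2 * M 0 - 1) * q.coeff n = 0 := by linarith
      rcases mul_eq_zero.mp this with h' | h'
      · linarith
      · exact absurd h' ha
    · intro j _ hj
      have : n < n + j := Nat.lt_add_of_pos_right (Nat.pos_of_ne_zero hj)
      rw [Polynomial.coeff_eq_zero_of_natDegree_lt this]
      ring
    · intro h'
      exact absurd (Finset.mem_range.mpr (Nat.succ_pos n)) h'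
  -- degree must be zero
  have hn0 : n = 0 := by
    by_contra hne
    obtain ⟨m, hm⟩ := Nat.exists_eq_succ_of_ne_zero hne
    have hc := hcoeff m
    have hsum : ∑ j ∈ Finset.range (n + 1), M j * ((m + j).choose j * q.coeff (m + j)) =
        M 0 * q.coeff m + M 1 * ((m + 1) * q.coeff (m + 1)) := by
      rw [← Finset.sum_subset (s₁ := ({0, 1} : Finset ℕ))]
      · rw [Finset.sum_pair (by norm_num)]
        simp [Nat.choose_one_right]
      · intro j hj
        fin_cases hj <;> simp [Finset.mem_range, hm] <;> omega
      · intro j _ hj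
        have hj2 : 2 ≤ j := by
          rcases Nat.lt_or_ge j 2 with h' | h'
          · interval_cases j <;> simp at hj
          · exact h'
        have : n < m + j := by omega
        rw [Polynomial.coeff_eq_zero_of_natDegree_lt this]
        ring
    rw [hsum] at hc
    have hM1 : M 1 = 0 := by
      have hqm : q.coeff (m + 1) = q.coeff n := by rw [hm]
      rw [hqm] at hc
      have : M 1 * ((m + 1 : ℝ) * q.coeff n) = 0 := by
        linear_combination (-(1/2 : ℝ)) * hc + (-(q.coeff m) / 2) * hM0
      rcases mul_eq_zero.mp this with h' | h'
      · exact h'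
      · rcases mul_eq_zero.mp h' with h'' | h''
        · exfalso; have : (0:ℝ) < (m:ℝ) + 1 := by positivity
          linarith
        · exact absurd h'' ha
    -- M 1 = 0 with nonnegative integrand forces q = 0
    have hqnn : ∀ y : ℝ, 0 ≤ y → 0 ≤ q.eval y := by
      intro y hy
      have h := hnonneg y hy
      rw [hp y] at h
      nlinarith [Real.exp_pos (-(l * y))]
    have hnn : 0 ≤ᵐ[volume.restrict (Set.Ioi (0:ℝ))]
        fun y => (q * Polynomial.X ^ 1).eval y * Real.exp (-(2 * l * y)) := by
      filter_upwards [ae_restrict_mem measurableSet_Ioi] with y hy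
      have : (0:ℝ) < y := hy
      simp only [Polynomial.eval_mul, Polynomial.eval_pow, Polynomial.eval_X, pow_one]
      have := hqnn y this.le
      positivity
    have hzero := (integral_eq_zero_iff_of_nonneg_ae hnn
      (integrableOn_poly_mul_exp (q * Polynomial.X ^ 1) h2l)).mp hM1
    have : q = 0 := by
      apply poly_eq_zero_of_ae
      filter_upwards [hzero, ae_restrict_mem measurableSet_Ioi] with y hy hy'
      have hy0 : (0:ℝ) < y := hy'
      simp only [Pi.zero_apply, Polynomial.eval_mul, Polynomial.eval_pow,
        Polynomial.eval_X, pow_one] at hy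
      have hexp := Real.exp_ne_zero (-(2 * l * y))
      rcases mul_eq_zero.mp hy with h' | h'
      · rcases mul_eq_zero.mp h' with h'' | h''
        · exact h''
        · exact absurd h'' hy0.ne'
      · exact absurd h' hexp
    exact hq0 this
  -- now q is a constant
  have hqC : q = Polynomial.C (q.coeff 0) := Polynomial.eq_C_of_natDegree_eq_zero hn0
  -- compute the normalization
  have hIexp : (∫ x in Set.Ioi (0:ℝ), Real.exp (-(l * x))) = l⁻¹ := by
    have h := integral_comp_mul_left_Ioi (fun u => Real.exp (-u)) 0 hl
    simp only [mul_zero, integral_exp_neg_Ioi_zero, smul_eq_mul, mul_one] at h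
    exact h
  have hceq : q.coeff 0 = l := by
    have h : (∫ x in Set.Ioi (0:ℝ), p x) = q.coeff 0 * l⁻¹ := by
      rw [← hIexp, ← integral_const_mul]
      refine integral_congr_ae (Filter.Eventually.of_forall fun x => ?_)
      rw [hp x]
      conv_lhs => rw [hqC]
      simp
    rw [hnorm] at h
    field_simp at h
    linarith
  constructor
  · rw [hqC, hceq]
  · intro x
    rw [hp x]
    conv_lhs => rw [hqC, hceq]
    simp
end
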